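/- Positivity of the quantity P: let γ>1, let U_b=(u_b,v_b,p_b,ρ_b) and U₁=(u₁,0,p₁,ρ₁) be states with ρ_b,ρ₁>0, u_b,u₁>0, p₁>p_b>0, and u₁>c₁ where c₁=√(γp₁/ρ₁), and suppose the full Rankine–Hugoniot conditions σ·(W(U₁)−W(U_b)) = H(U₁)−H(U_b) hold for some σ≠0. Then P := u₁·( h_b + (u_b²+v_b²)/2 − u₁²/2 ) + ( c₁²/(γ−1) + u₁² )·(u₁ − u_b) > 0, where h_b = γp_b/((γ−1)ρ_b). -/

import Mathlib

/-!
Across the discontinuity the flux `σ W - H` equals `(j, u j + σ p, v j - p, j B)`, where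
`j = ρ (σ u - v)` is the mass flux through the front and `B = h + (u² + v²)/2` is the total
enthalpy. Since `j = σ ρ₁ u₁ ≠ 0`, the Rankine–Hugoniot conditions give `B_b = B₁` and
`ρ₁ u₁ (u₁ - u_b) = p_b - p₁`. Substituting both, `(γ - 1) ρ₁ u₁ P` becomes
`u₁² (p₁ + (γ - 1) p_b) - c₁² (p₁ - p_b)`, which the supersonic condition `c₁² < u₁²` bounds
below by `γ c₁² p_b > 0`.
-/

noncomputable section

/-- The flux map `W` of the 2-D steady full Euler system,
with state `U = (u, v, p, ρ)`. -/
def Wf (γ : ℝ) (U : Fin 4 → ℝ) : Fin 4 → ℝ :=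
  ![U 3 * U 0,
    U 3 * U 0 ^ 2 + U 2,
    U 3 * U 0 * U 1,
    U 3 * U 0 * (γ * U 2 / ((γ - 1) * U 3) + (U 0 ^ 2 + U 1 ^ 2) / 2)]

/-- The flux map `H` of the 2-D steady full Euler system. -/
def Hf (γ : ℝ) (U : Fin 4 → ℝ) : Fin 4 → ℝ :=
  ![U 3 * U 1,
    U 3 * U 0 * U 1,
    U 3 * U 1 ^ 2 + U 2,
    U 3 * U 1 * (γ * U 2 / ((γ - 1) * U 3) + (U 0 ^ 2 + U 1 ^ 2) / 2)]

namespace SteadyEuler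

def massFlux (σ : ℝ) (U : Fin 4 → ℝ) : ℝ := U 3 * (σ * U 0 - U 1)

def totalEnthalpy (γ : ℝ) (U : Fin 4 → ℝ) : ℝ :=
  γ * U 2 / ((γ - 1) * U 3) + (U 0 ^ 2 + U 1 ^ 2) / 2

theorem smul_Wf_sub_Hf (γ σ : ℝ) (U : Fin 4 → ℝ) :
    σ • Wf γ U - Hf γ U =
      ![massFlux σ U, U 0 * massFlux σ U + σ * U 2, U 1 * massFlux σ U - U 2,
        massFlux σ U * totalEnthalpy γ U] := by
  ext i
  fin_cases i <;> simp [Wf, Hf, massFlux, totalEnthalpy] <;> ring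

section RankineHugoniot

variable {γ σ : ℝ} {U V : Fin 4 → ℝ}
  (hRH : σ • (Wf γ U - Wf γ V) = Hf γ U - Hf γ V)
include hRH

theorem jumps_of_rankineHugoniot :
    massFlux σ U = massFlux σ V ∧
      U 0 * massFlux σ U + σ * U 2 = V 0 * massFlux σ V + σ * V 2 ∧
      massFlux σ U * totalEnthalpy γ U = massFlux σ V * totalEnthalpy γ V := by
  have h := sub_eq_sub_iff_sub_eq_sub.1 (smul_sub σ (Wf γ U) (Wf γ V) ▸ hRH)
  rw [smul_Wf_sub_Hf, smul_Wf_sub_Hf] at h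
  have h0 := congrFun h 0
  have h1 := congrFun h 1
  have h3 := congrFun h 3
  simp only [Fin.isValue, Matrix.cons_val] at h0 h1 h3
  exact ⟨h0, h1, h3⟩

theorem totalEnthalpy_eq_of_rankineHugoniot (hj : massFlux σ U ≠ 0) :
    totalEnthalpy γ U = totalEnthalpy γ V := by
  obtain ⟨hmass, -, henergy⟩ := jumps_of_rankineHugoniot hRH
  rw [← hmass] at henergy
  exact mul_left_cancel₀ hj henergy

theorem momentum_jump_of_rankineHugoniot :
    massFlux σ U * (U 0 - V 0) = σ * (V 2 - U 2) := by
  obtain ⟨hmass, hmom, -⟩ := jumps_of_rankineHugoniot hRH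
  rw [← hmass] at hmom
  linear_combination hmom

end RankineHugoniot

theorem shock_quantity_pos {γ ρ u p p_b c δ : ℝ} (hγ : 1 < γ) (hρ : 0 < ρ) (hu : 0 < u)
    (hp_b : 0 < p_b) (hc : c ^ 2 = γ * p / ρ) (hsup : c ^ 2 < u ^ 2)
    (hmom : ρ * u * δ = p_b - p) :
    0 < u * (γ * p / ((γ - 1) * ρ)) + (c ^ 2 / (γ - 1) + u ^ 2) * δ := by
  have hγ1 : 0 < γ - 1 := sub_pos.2 hγ
  have hρc : ρ * c ^ 2 = γ * p := by rw [hc]; field_simp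
  have hp : 0 ≤ p := by nlinarith [sq_nonneg c]
  have hscaled : (γ - 1) * ρ * u * (u * (γ * p / ((γ - 1) * ρ)) + (c ^ 2 / (γ - 1) + u ^ 2) * δ)
      = u ^ 2 * (p + (γ - 1) * p_b) - c ^ 2 * (p - p_b) := by
    field_simp
    linear_combination (c ^ 2 + (γ - 1) * u ^ 2) * hmom
  have hbound : γ * c ^ 2 * p_b < u ^ 2 * (p + (γ - 1) * p_b) - c ^ 2 * (p - p_b) := by
    nlinarith [mul_lt_mul_of_pos_right hsup (by positivity : 0 < p + (γ - 1) * p_b)]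
  refine pos_of_mul_pos_right ?_ (by positivity : 0 ≤ (γ - 1) * ρ * u)
  rw [hscaled]
  exact lt_of_le_of_lt (by positivity) hbound

end SteadyEuler

open SteadyEuler in
theorem P_positive_general
    (γ u_b v_b p_b ρ_b u₁ p₁ ρ₁ σ : ℝ) (hγ : 1 < γ)
    (hρ1 : 0 < ρ₁) (hu1 : 0 < u₁)
    (hpb : 0 < p_b) (hpp : p_b < p₁)
    (c₁ : ℝ) (hc₁ : c₁ = Real.sqrt (γ * p₁ / ρ₁)) (hsup : c₁ < u₁)
    (hσ : σ ≠ 0)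
    (hRH : σ • (Wf γ ![u₁, 0, p₁, ρ₁] - Wf γ ![u_b, v_b, p_b, ρ_b]) =
      Hf γ ![u₁, 0, p₁, ρ₁] - Hf γ ![u_b, v_b, p_b, ρ_b]) :
    0 < u₁ * (γ * p_b / ((γ - 1) * ρ_b) + (u_b ^ 2 + v_b ^ 2) / 2 - u₁ ^ 2 / 2) +
        (c₁ ^ 2 / (γ - 1) + u₁ ^ 2) * (u₁ - u_b) := by
  have hj : massFlux σ ![u₁, 0, p₁, ρ₁] = σ * (ρ₁ * u₁) := by simp [massFlux]; ring
  have hj0 : σ * (ρ₁ * u₁) ≠ 0 := by positivity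
  have hB := totalEnthalpy_eq_of_rankineHugoniot hRH (hj ▸ hj0)
  have hmom := momentum_jump_of_rankineHugoniot hRH
  simp only [totalEnthalpy, hj, Matrix.cons_val] at hB hmom
  have hmom₁ : ρ₁ * u₁ * (u₁ - u_b) = p_b - p₁ :=
    mul_left_cancel₀ hσ (by linear_combination hmom)
  have hp₁ : 0 < p₁ := hpb.trans hpp
  have hc₁sq : c₁ ^ 2 = γ * p₁ / ρ₁ := hc₁ ▸ Real.sq_sqrt (by positivity)
  have hc₁_nonneg : 0 ≤ c₁ := hc₁ ▸ Real.sqrt_nonneg _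
  rw [← hB]
  convert shock_quantity_pos hγ hρ1 hu1 hpb hc₁sq (pow_lt_pow_left₀ hsup hc₁_nonneg two_ne_zero) hmom₁ using 2
  ring

/-- Positivity of the quantity `P` across a strong 1-shock:
under the full Rankine–Hugoniot conditions between `U_b = (u_b, v_b, p_b, ρ_b)` and
`U₁ = (u₁, 0, p₁, ρ₁)`, with `p₁ > p_b` and `u₁ > c₁`, one has
`P = u₁ (h_b + (u_b² + v_b²)/2 - u₁²/2) + (c₁²/(γ-1) + u₁²)(u₁ - u_b) > 0`. -/
theorem P_positive
    (γ u_b v_b p_b ρ_b u₁ p₁ ρ₁ σ : ℝ) (hγ : 1 < γ)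
    (hρb : 0 < ρ_b) (hρ1 : 0 < ρ₁) (hub : 0 < u_b) (hu1 : 0 < u₁)
    (hpb : 0 < p_b) (hpp : p_b < p₁)
    (c₁ : ℝ) (hc₁ : c₁ = Real.sqrt (γ * p₁ / ρ₁)) (hsup : c₁ < u₁)
    (hσ : σ ≠ 0)
    (hRH : σ • (Wf γ ![u₁, 0, p₁, ρ₁] - Wf γ ![u_b, v_b, p_b, ρ_b]) =
      Hf γ ![u₁, 0, p₁, ρ₁] - Hf γ ![u_b, v_b, p_b, ρ_b]) :
    0 < u₁ * (γ * p_b / ((γ - 1) * ρ_b) + (u_b ^ 2 + v_b ^ 2) / 2 - u₁ ^ 2 / 2) +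
        (c₁ ^ 2 / (γ - 1) + u₁ ^ 2) * (u₁ - u_b) :=
  P_positive_general γ u_b v_b p_b ρ_b u₁ p₁ ρ₁ σ hγ hρ1 hu1 hpb hpp c₁ hc₁ hsup hσ hRH
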